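/- Let G be a graph with a fixed vertex ordering and the associated ordering of the facets of NC(G) via the reverse lexicographic order on edges. For every face σ of NC(G), there exists a face σ' of NC(G) with mes(σ) = mes(σ') such that the induced subgraph of G on the complement of σ' is a disjoint union of a star K_{1,k} together with isolated vertices, where the center a of the star precedes all leaves in the vertex order. -/

import Mathlib

variable {V : Type*} [Fintype V] [LinearOrder V]

open Finset


/-- `W` dominates the set `A` in `G`: every vertex of `A` is in `W` or adjacent to a vertex of `W`. -/
def Dominates (G : SimpleGraph V) (W A : Finset V) : Prop :=
  ∀ a ∈ A, a ∈ W ∨ ∃ w ∈ W, G.Adj w a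

/-- `I` is an independent set of `G`. -/
def IndepSet (G : SimpleGraph V) (I : Finset V) : Prop :=
  ∀ u ∈ I, ∀ v ∈ I, ¬ G.Adj u v

instance (G : SimpleGraph V) [DecidableRel G.Adj] (I : Finset V) :
    Decidable (IndepSet G I) := by unfold IndepSet; infer_instance

/-- The domination number of `G`. -/
noncomputable def gamma (G : SimpleGraph V) : ℕ :=
  sInf {k | ∃ W : Finset V, W.card = k ∧ Dominates G W Finset.univ}

/-- The independence domination number of `G`. -/
noncomputable def igamma (G : SimpleGraph V) : ℕ :=
  sInf {k | ∀ I : Finset V, IndepSet G I → ∃ W : Finset V, W.card ≤ k ∧ Dominates G W I}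

/-- The noncover complex of `G`: faces are the vertex sets whose complement is not independent. -/
def NC (G : SimpleGraph V) [DecidableRel G.Adj] : Finset (Finset V) :=
  Finset.univ.filter fun W => ¬ IndepSet G Wᶜ

/-- The independence complex of `G`. -/
def IndComplex (G : SimpleGraph V) [DecidableRel G.Adj] : Finset (Finset V) :=
  Finset.univ.filter fun I => IndepSet G I

/-- The combinatorial Alexander dual of a complex on the full vertex set `V`. -/
def AlexDual (K : Finset (Finset V)) : Finset (Finset V) :=
  Finset.univ.filter fun s => sᶜ ∉ K

/-- `K` is a simplicial complex (downward closed family of finite sets). -/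
def IsComplex (K : Finset (Finset V)) : Prop :=
  ∀ σ ∈ K, ∀ τ ⊆ σ, τ ∈ K

/-- `s` is a maximal face (facet) of `K`. -/
def IsMaxFace (K : Finset (Finset V)) (s : Finset V) : Prop :=
  s ∈ K ∧ ∀ t ∈ K, s ⊆ t → t = s

/-- `σ` is a free face of `K`: a face contained in a unique maximal face. -/
def IsFreeFace (K : Finset (Finset V)) (σ : Finset V) : Prop :=
  σ ∈ K ∧ ∃ τ ∈ K, σ ⊆ τ ∧ ∀ ρ ∈ K, σ ⊆ ρ → ρ ⊆ τ

/-- `K'` is obtained from `K` by an elementary `d`-collapse. -/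
def ElemCollapse (d : ℕ) (K K' : Finset (Finset V)) : Prop :=
  ∃ σ : Finset V, IsFreeFace K σ ∧ σ.card ≤ d ∧ K' = K.filter fun ρ => ¬ σ ⊆ ρ

/-- `K` is `d`-collapsible. -/
def Collapsible (d : ℕ) (K : Finset (Finset V)) : Prop :=
  Relation.ReflTransGen (ElemCollapse d) K ∅

/-- chordality -/
def IsChordal (G : SimpleGraph V) : Prop :=
  ∀ (u : V) (c : G.Walk u u), c.IsCycle → 4 ≤ c.length →
    ∃ x ∈ c.support, ∃ y ∈ c.support, G.Adj x y ∧ s(x, y) ∉ c.edges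

/-- simplicial vertex -/
def IsSimplicialVtx (G : SimpleGraph V) (v : V) : Prop :=
  ∀ x y : V, G.Adj v x → G.Adj v y → x ≠ y → G.Adj x y


/-- Auxiliary recursion computing the first `j` entries of the minimal exclusion sequence of
the face `σ` with respect to the ordered list `facets 0, facets 1, …` of maximal faces. -/
def mesAux (σ : Finset V) (facets : ℕ → Finset V) : ℕ → List V
  | 0 => []
  | j + 1 =>
    let prev := mesAux σ facets j
    let A := σ \ facets j
    let B := A.filter fun v => v ∈ prev
    prev ++
      (if hB : B.Nonempty then [B.min' hB]
       else if hA : A.Nonempty then [A.min' hA] else [])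

open Classical in
/-- `i(σ)` (in 0-based indexing): the least `j` such that `σ ⊆ facets j`. -/
noncomputable def mesIdx (facets : ℕ → Finset V) (σ : Finset V) : ℕ :=
  if h : ∃ j, σ ⊆ facets j then Nat.find h else 0

/-- The minimal exclusion sequence `mes(σ)` of a face `σ`. -/
noncomputable def mes (facets : ℕ → Finset V) (σ : Finset V) : List V :=
  mesAux σ facets (mesIdx facets σ)

/-- `M(σ)`: the set of vertices appearing in `mes(σ)`. -/
noncomputable def mesSet (facets : ℕ → Finset V) (σ : Finset V) : Finset V :=
  (mes facets σ).toFinset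

/-- The ordered facets `σ₁, σ₂, …` of the noncover complex `NC G`: complements of the edges of
`G`, where the edges are listed in decreasing lexicographic order (induced by the vertex order). -/
noncomputable def ncFacets (G : SimpleGraph V) [DecidableRel G.Adj] : ℕ → Finset V :=
  fun j =>
    let L : List (Lex (V × V)) :=
      ((Finset.univ.filter fun p : Lex (V × V) =>
        G.Adj (ofLex p).1 (ofLex p).2 ∧ (ofLex p).1 < (ofLex p).2).sort (· ≤ ·)).reverse
    match L[j]? with
    | some p => ({(ofLex p).1, (ofLex p).2} : Finset V)ᶜ
    | none => ∅


/-!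
Among the faces with the same minimal exclusion sequence as `σ`, take one, `σ'`, maximal under
inclusion, and let `ab` (with `a < b`) be the edge `e_{i(σ')}`. Since the facets are listed by
decreasing edges, `ab` is the lexicographically largest edge of `G` inside `σ'ᶜ`, and every
facet `σ_k` with `k ≤ i(σ')` avoids all vertices smaller than `a`. Hence adding such a vertex to
`σ'` changes neither `i(σ')` nor the sequence, so by maximality `a` is the least vertex of
`σ'ᶜ`. An edge `yz` (`y < z`) inside `σ'ᶜ` is then lexicographically at most `ab`, forcing
`y = a`: every edge of `G[σ'ᶜ]` passes through its least vertex `a`, i.e. it is a star centered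
at `a` plus isolated vertices.
-/

theorem exists_star_decomposition {α : Type*} [LinearOrder α] (G : SimpleGraph α)
    {s : Finset α} {a b : α} (ha : a ∈ s) (hb : b ∈ s) (hab : G.Adj a b)
    (hmin : ∀ y ∈ s, a ≤ y) (hcover : ∀ y ∈ s, ∀ z ∈ s, G.Adj y z → y = a ∨ z = a) :
    ∃ B C : Finset α,
      s = insert a (B ∪ C) ∧ a ∉ B ∪ C ∧ Disjoint B C ∧ B.Nonempty ∧
      (∀ b ∈ B, G.Adj a b ∧ a < b) ∧
      (∀ b ∈ B, ∀ b' ∈ B, ¬ G.Adj b b') ∧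
      (∀ c ∈ C, ∀ x ∈ s, ¬ G.Adj c x) := by
  classical
  refine ⟨s.filter (G.Adj a), s \ insert a (s.filter (G.Adj a)), ?_, ?_, ?_, ⟨b, ?_⟩, ?_, ?_, ?_⟩
  · rw [← insert_union, union_sdiff_self_eq_union,
      union_eq_right.2 (insert_subset ha (filter_subset _ s))]
  · simp
  · exact disjoint_sdiff.mono_left (subset_insert a _)
  · exact mem_filter.2 ⟨hb, hab⟩
  · intro y hy
    obtain ⟨hys, hay⟩ := mem_filter.1 hy
    exact ⟨hay, (hmin y hys).lt_of_ne hay.ne⟩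
  · intro y hy z hz hyz
    obtain ⟨hys, hay⟩ := mem_filter.1 hy
    obtain ⟨hzs, haz⟩ := mem_filter.1 hz
    rcases hcover y hys z hzs hyz with rfl | rfl
    · exact hay.ne rfl
    · exact haz.ne rfl
  · intro c hc x hx hcx
    obtain ⟨hcs, hc⟩ := mem_sdiff.1 hc
    rcases hcover c hcs x hx hcx with rfl | rfl
    · exact hc (mem_insert_self c _)
    · exact hc (mem_insert_of_mem (mem_filter.2 ⟨hcs, hcx.symm⟩))

section MinimalExclusionSequence

variable {α : Type*} [LinearOrder α] (F : ℕ → Finset α)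

theorem mesAux_insert_of_forall_mem (σ : Finset α) {x : α} {n : ℕ} (hx : ∀ k < n, x ∈ F k) :
    mesAux (insert x σ) F n = mesAux σ F n := by
  induction n with
  | zero => rfl
  | succ j ih =>
    simp only [mesAux]
    rw [ih fun k hk => hx k (hk.trans j.lt_succ_self), insert_sdiff_of_mem _ (hx j j.lt_succ_self)]

variable {F}

theorem subset_mesIdx {σ : Finset α} (hσ : ∃ j, σ ⊆ F j) : σ ⊆ F (mesIdx F σ) := by
  rw [mesIdx, dif_pos hσ]
  exact Nat.find_spec hσ

theorem mesIdx_le_of_subset {σ : Finset α} {j : ℕ} (h : σ ⊆ F j) : mesIdx F σ ≤ j := by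
  rw [mesIdx, dif_pos ⟨j, h⟩]
  exact Nat.find_min' _ h

theorem mes_insert_of_forall_mem {σ : Finset α} {x : α} (hσ : ∃ j, σ ⊆ F j)
    (hx : ∀ k ≤ mesIdx F σ, x ∈ F k) : mes F (insert x σ) = mes F σ := by
  have hsub : insert x σ ⊆ F (mesIdx F σ) := insert_subset (hx _ le_rfl) (subset_mesIdx hσ)
  have hidx : mesIdx F (insert x σ) = mesIdx F σ :=
    (mesIdx_le_of_subset hsub).antisymm
      (mesIdx_le_of_subset ((subset_insert x σ).trans (subset_mesIdx ⟨_, hsub⟩)))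
  rw [mes, mes, hidx, mesAux_insert_of_forall_mem F σ fun k hk => hx k hk.le]

end MinimalExclusionSequence

section NoncoverFacets

variable (G : SimpleGraph V) [DecidableRel G.Adj]

/-- The edges `e₁, e₂, …` of `G` underlying `ncFacets`. -/
noncomputable def edgeList : List (Lex (V × V)) :=
  ((univ.filter fun p : Lex (V × V) =>
    G.Adj (ofLex p).1 (ofLex p).2 ∧ (ofLex p).1 < (ofLex p).2).sort (· ≤ ·)).reverse

theorem sortedGT_edgeList : (edgeList G).SortedGT :=
  (sortedLT_sort _).reverse

variable {G}

theorem mem_edgeList {p : Lex (V × V)} :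
    p ∈ edgeList G ↔ G.Adj (ofLex p).1 (ofLex p).2 ∧ (ofLex p).1 < (ofLex p).2 := by
  simp [edgeList]

theorem ncFacets_eq_compl {k : ℕ} (hk : k < (edgeList G).length) :
    ncFacets G k = {(ofLex (edgeList G)[k]).1, (ofLex (edgeList G)[k]).2}ᶜ := by
  change (match (edgeList G)[k]? with
    | some p => ({(ofLex p).1, (ofLex p).2} : Finset V)ᶜ
    | none => ∅) = _
  rw [List.getElem?_eq_getElem hk]

theorem subset_ncFacets_iff {σ : Finset V} {k : ℕ} (hk : k < (edgeList G).length) :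
    σ ⊆ ncFacets G k ↔ (ofLex (edgeList G)[k]).1 ∉ σ ∧ (ofLex (edgeList G)[k]).2 ∉ σ := by
  rw [ncFacets_eq_compl hk, subset_compl_iff_disjoint_right, disjoint_insert_right,
    disjoint_singleton_right]

theorem mem_ncFacets_of_lt_fst {x : V} {i k : ℕ} (hi : i < (edgeList G).length) (hki : k ≤ i)
    (hx : x < (ofLex (edgeList G)[i]).1) : x ∈ ncFacets G k := by
  have hk := hki.trans_lt hi
  have hfst : (ofLex (edgeList G)[i]).1 ≤ (ofLex (edgeList G)[k]).1 :=
    Prod.Lex.monotone_fst _ _ ((sortedGT_edgeList G).getElem_le_getElem_iff.2 hki)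
  have hlt := (mem_edgeList.1 (List.getElem_mem hk)).2
  rw [ncFacets_eq_compl hk, mem_compl, mem_insert, mem_singleton]
  rintro (rfl | rfl)
  exacts [(hx.trans_le hfst).false, ((hx.trans_le hfst).trans hlt).false]

theorem exists_subset_ncFacets_of_adj {σ : Finset V} {y z : V} (hyz : G.Adj y z) (hlt : y < z)
    (hy : y ∉ σ) (hz : z ∉ σ) :
    ∃ k, ∃ hk : k < (edgeList G).length, (edgeList G)[k] = toLex (y, z) ∧ σ ⊆ ncFacets G k := by
  have hmem : toLex (y, z) ∈ edgeList G := mem_edgeList.2 ⟨hyz, hlt⟩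
  obtain ⟨k, hk, hkyz⟩ := List.mem_iff_getElem.1 hmem
  exact ⟨k, hk, hkyz, (subset_ncFacets_iff hk).2 (by simpa [hkyz] using ⟨hy, hz⟩)⟩

theorem exists_subset_ncFacets {σ : Finset V} (hσ : σ ∈ NC G) :
    ∃ k < (edgeList G).length, σ ⊆ ncFacets G k := by
  obtain ⟨y, hy, z, hz, hyz⟩ : ∃ y ∈ σᶜ, ∃ z ∈ σᶜ, G.Adj y z := by
    simpa [NC, IndepSet] using hσ
  rw [mem_compl] at hy hz
  rcases hyz.ne.lt_or_gt with hlt | hlt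
  · obtain ⟨k, hk, -, hsub⟩ := exists_subset_ncFacets_of_adj hyz hlt hy hz
    exact ⟨k, hk, hsub⟩
  · obtain ⟨k, hk, -, hsub⟩ := exists_subset_ncFacets_of_adj hyz.symm hlt hz hy
    exact ⟨k, hk, hsub⟩

theorem mesIdx_lt_length {σ : Finset V} (hσ : σ ∈ NC G) :
    mesIdx (ncFacets G) σ < (edgeList G).length := by
  obtain ⟨k, hk, hsub⟩ := exists_subset_ncFacets hσ
  exact (mesIdx_le_of_subset hsub).trans_lt hk

theorem subset_ncFacets_mesIdx {σ : Finset V} (hσ : σ ∈ NC G) :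
    σ ⊆ ncFacets G (mesIdx (ncFacets G) σ) :=
  have ⟨k, _, hk⟩ := exists_subset_ncFacets hσ
  subset_mesIdx ⟨k, hk⟩

theorem toLex_le_edgeList_mesIdx {σ : Finset V} (hσ : σ ∈ NC G) {y z : V} (hyz : G.Adj y z)
    (hlt : y < z) (hy : y ∉ σ) (hz : z ∉ σ) :
    toLex (y, z) ≤ (edgeList G)[mesIdx (ncFacets G) σ]'(mesIdx_lt_length hσ) := by
  obtain ⟨k, hk, hkyz, hsub⟩ := exists_subset_ncFacets_of_adj hyz hlt hy hz
  rw [← hkyz]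
  exact (sortedGT_edgeList G).getElem_le_getElem_iff.2 (mesIdx_le_of_subset hsub)

theorem exists_star_center_of_maximal {σ₀ σ : Finset V}
    (hσ : Maximal (fun τ => τ ∈ NC G ∧ mes (ncFacets G) τ = mes (ncFacets G) σ₀) σ) :
    ∃ a ∈ σᶜ, (∃ b ∈ σᶜ, G.Adj a b) ∧ (∀ y ∈ σᶜ, a ≤ y) ∧
      ∀ y ∈ σᶜ, ∀ z ∈ σᶜ, G.Adj y z → y = a ∨ z = a := by
  obtain ⟨hσNC, hσmes⟩ := hσ.prop
  have hi := mesIdx_lt_length hσNC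
  set i := mesIdx (ncFacets G) σ
  set a := (ofLex (edgeList G)[i]).1
  set b := (ofLex (edgeList G)[i]).2
  have hab : G.Adj a b ∧ a < b := mem_edgeList.1 (List.getElem_mem hi)
  obtain ⟨ha, hb⟩ : a ∉ σ ∧ b ∉ σ := (subset_ncFacets_iff hi).1 (subset_ncFacets_mesIdx hσNC)
  have hmin : ∀ x ∉ σ, a ≤ x := by
    intro x hxσ
    by_contra! hxa
    have hxNC : insert x σ ∈ NC G := by
      simp only [NC, mem_filter, mem_univ, true_and]
      exact fun hind => hind a (by simp [ha, hxa.ne']) b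
        (by simp [hb, (hxa.trans hab.2).ne']) hab.1
    have hxmes := mes_insert_of_forall_mem ⟨i, subset_ncFacets_mesIdx hσNC⟩
      fun k hk => mem_ncFacets_of_lt_fst hi hk hxa
    exact hxσ (hσ.eq_of_ge ⟨hxNC, hxmes.trans hσmes⟩ (subset_insert x σ) ▸ mem_insert_self x σ)
  have hcover_lt : ∀ y z, G.Adj y z → y < z → y ∉ σ → z ∉ σ → y = a := fun y z hyz hlt hy hz =>
    (Prod.Lex.monotone_fst _ _ (toLex_le_edgeList_mesIdx hσNC hyz hlt hy hz)).antisymm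
      (hmin y hy)
  refine ⟨a, mem_compl.2 ha, ⟨b, mem_compl.2 hb, hab.1⟩, fun y hy => hmin y (mem_compl.1 hy),
    fun y hy z hz hyz => ?_⟩
  rw [mem_compl] at hy hz
  rcases hyz.ne.lt_or_gt with hlt | hlt
  · exact .inl (hcover_lt y z hyz hlt hy hz)
  · exact .inr (hcover_lt z y hyz.symm hlt hz hy)

end NoncoverFacets

/-- For every face `σ` of `NC(G)` there is a face `σ'` with the same minimal
exclusion sequence such that the complement of `σ'` induces the disjoint union of a star
(center `a`, leaves `B`, with `a` preceding all leaves) and isolated vertices `C`. -/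
theorem mes_star_normal_form (G : SimpleGraph V) [DecidableRel G.Adj]
    (σ : Finset V) (hσ : σ ∈ NC G) :
    ∃ σ' ∈ NC G, mes (ncFacets G) σ = mes (ncFacets G) σ' ∧
      ∃ (a : V) (B C : Finset V),
        σ'ᶜ = insert a (B ∪ C) ∧ a ∉ B ∪ C ∧ Disjoint B C ∧ B.Nonempty ∧
        (∀ b ∈ B, G.Adj a b ∧ a < b) ∧
        (∀ b ∈ B, ∀ b' ∈ B, ¬ G.Adj b b') ∧
        (∀ c ∈ C, ∀ x ∈ (σ'ᶜ : Finset V), ¬ G.Adj c x) := by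
  obtain ⟨σ', hσ'⟩ :=
    ((NC G).filter fun τ => mes (ncFacets G) τ = mes (ncFacets G) σ).exists_maximal
      ⟨σ, mem_filter.2 ⟨hσ, rfl⟩⟩
  simp only [mem_filter] at hσ'
  obtain ⟨a, ha, ⟨b, hb, hab⟩, hmin, hcover⟩ := exists_star_center_of_maximal hσ'
  exact ⟨σ', hσ'.prop.1, hσ'.prop.2.symm, a, exists_star_decomposition G ha hb hab hmin hcover⟩
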